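/- If www is a cube factor of the infinite Fibonacci word, then |w| = f_m for some m ≥ 2; conversely, for every m ≥ 2 there exists a cube factor www of the Fibonacci word with |w| = f_m. -/

import Mathlib

/-- Finite Fibonacci words: `fibF 0 = a`, `fibF 1 = ab`,
`fibF (m+2) = fibF (m+1) ++ fibF m`, with letters `a = false`, `b = true`.
Each `fibF m` is a prefix of the next, so a word is a factor of the infinite
Fibonacci word `𝔽` iff it is a factor (infix) of some `fibF m`. -/
def fibF : ℕ → List Bool
  | 0 => [false]
  | 1 => [false, true]
  | n + 2 => fibF (n + 1) ++ fibF n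

/-- A word is a factor of the infinite Fibonacci word. -/
def IsFactorF (w : List Bool) : Prop := ∃ m, w <:+: fibF m

/-- The prefix `𝔽[1,n]` of the infinite Fibonacci word of length `n`
(`fibF n` has length `fib (n+2) ≥ n`). -/
def fibPrefix (n : ℕ) : List Bool := (fibF n).take n

/-!
Write `σ` for `fibSubst`, so that `fibF (n + 1) = σ (fibF n)`, and call `w` good when `w w⁻` is
a factor, `w⁻` being `w` without its last letter (a cube `w w w` makes `w` good). A good
`w ∉ {[], b}` is a rotation of a good `a`-initial word, since `b` is always preceded by `a`.
A good `a`-initial `w` with `|w| ≥ 2` starts and restarts at `σ`-block boundaries, so `w = σ p`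
with `p` good and strictly shorter. As `|σ p| = |p| + |p|_a` and `|σ p|_a = |p|`, induction
gives `(|w|, |w|_a) = (f_m, f_{m-1})`. The lengths `1, 2` are excluded through the forbidden
factors `bb`, `aaa`, `ababab`. Conversely `fibF (n + 6)` contains `s s s' s`, where
`s = fibF (n + 2)`, `s' = fibF (n + 1)`, and `s' s` begins with `s`.
-/
def fibSubst : List Bool → List Bool
  | [] => []
  | false :: l => false :: true :: fibSubst l
  | true :: l => false :: fibSubst l

@[simp]
lemma fibSubst_nil : fibSubst [] = [] := rfl

@[simp]
lemma fibSubst_false_cons (l : List Bool) : fibSubst (false :: l) = false :: true :: fibSubst l :=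
  rfl

@[simp]
lemma fibSubst_true_cons (l : List Bool) : fibSubst (true :: l) = false :: fibSubst l := rfl

@[simp]
lemma fibSubst_append (u v : List Bool) : fibSubst (u ++ v) = fibSubst u ++ fibSubst v := by
  induction u with
  | nil => rfl
  | cons c u ih => cases c <;> simp [ih]

@[simp]
lemma fibSubst_eq_nil_iff {v : List Bool} : fibSubst v = [] ↔ v = [] := by
  rcases v with _ | ⟨_ | _, _⟩ <;> simp

@[simp]
lemma fibSubst_ne_true_cons (v y : List Bool) : fibSubst v ≠ true :: y := by
  rcases v with _ | ⟨_ | _, _⟩ <;> simp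

lemma length_fibSubst (v : List Bool) : (fibSubst v).length = v.length + v.count false := by
  induction v with
  | nil => rfl
  | cons c v ih => cases c <;> simp [ih] <;> omega

lemma count_false_fibSubst (v : List Bool) : (fibSubst v).count false = v.length := by
  induction v with
  | nil => rfl
  | cons c v ih => cases c <;> simp [ih]

lemma fibSubst_injective : Function.Injective fibSubst := by
  intro u
  induction u with
  | nil => intro v h; exact (fibSubst_eq_nil_iff.mp h.symm).symm
  | cons c u ih =>
    rintro (_ | ⟨d, v⟩) h
    · simp at h
    cases c <;> cases d <;> simp at h
    · rw [ih h]
    · exact (fibSubst_ne_true_cons _ _ h.symm).elim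
    · rw [ih h]

lemma not_true_true_infix_fibSubst (v : List Bool) : ¬ [true, true] <:+: fibSubst v := by
  induction v with
  | nil => simp
  | cons c v ih =>
    have : ¬ [true] <+: fibSubst v := fun ⟨t, ht⟩ => fibSubst_ne_true_cons v t ht.symm
    cases c <;> simp [List.infix_cons_iff, ih, this]

lemma exists_split_of_fibSubst_eq_append {v x z : List Bool} (h : fibSubst v = x ++ z)
    (hz : z.head? ≠ some true) :
    ∃ v₁ v₂, v = v₁ ++ v₂ ∧ fibSubst v₁ = x ∧ fibSubst v₂ = z := by
  induction v generalizing x with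
  | nil =>
    obtain ⟨rfl, rfl⟩ := List.append_eq_nil_iff.mp h.symm
    exact ⟨[], [], rfl, rfl, rfl⟩
  | cons c v ih =>
    rcases x with _ | ⟨e, x⟩
    · exact ⟨[], c :: v, rfl, rfl, h⟩
    cases c
    · rcases x with _ | ⟨e', x⟩
      · simp only [fibSubst_false_cons, List.cons_append, List.nil_append, List.cons.injEq] at h
        exact absurd (by simp [← h.2]) hz
      simp only [fibSubst_false_cons, List.cons_append, List.cons.injEq] at h
      obtain ⟨v₁, v₂, rfl, rfl, rfl⟩ := ih h.2.2
      exact ⟨false :: v₁, v₂, rfl, by simp [← h.1, ← h.2.1], rfl⟩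
    · simp only [fibSubst_true_cons, List.cons_append, List.cons.injEq] at h
      obtain ⟨v₁, v₂, rfl, rfl, rfl⟩ := ih h.2
      exact ⟨true :: v₁, v₂, rfl, by simp [← h.1], rfl⟩

lemma dropLast_prefix_of_fibSubst_eq {p r y : List Bool} (hp : ¬ [true, true] <:+: p)
    (h : fibSubst r = (fibSubst p).dropLast ++ y) : p.dropLast <+: r := by
  rcases List.eq_nil_or_concat' p with rfl | ⟨q, ℓ, rfl⟩
  · exact List.nil_prefix
  rw [List.dropLast_concat]
  suffices hsplit : ∃ z, fibSubst r = fibSubst q ++ z ∧ z.head? ≠ some true by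
    obtain ⟨z, hz, hz0⟩ := hsplit
    obtain ⟨r₁, r₂, rfl, hr₁, -⟩ := exists_split_of_fibSubst_eq_append hz hz0
    rw [fibSubst_injective hr₁]
    exact List.prefix_append _ _
  cases ℓ
  · exact ⟨false :: y, by simpa using h, by simp⟩
  simp only [fibSubst_append, fibSubst_true_cons, fibSubst_nil, List.dropLast_concat] at h
  rcases y with _ | ⟨_ | _, y⟩
  · exact ⟨[], by simpa using h, by simp⟩
  · exact ⟨false :: y, h, by simp⟩
  -- `σ(r)` begins with `σ(q) b`: `q = []` and `q` ending in `a` put `b` or `bb` into `σ(r)`,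
  -- `q` ending in `b` puts `bb` into `p`.
  exfalso
  rcases List.eq_nil_or_concat' q with rfl | ⟨q', ℓ', rfl⟩
  · simp at h
  cases ℓ'
  · exact not_true_true_infix_fibSubst r ⟨fibSubst q' ++ [false], y, by simp [h]⟩
  · exact hp ⟨q', [], by simp⟩

lemma fibF_succ (n : ℕ) : fibF (n + 1) = fibSubst (fibF n) := by
  induction n using Nat.strong_induction_on with
  | _ n ih =>
    match n, ih with
    | 0, _ => rfl
    | 1, _ => rfl
    | n + 2, ih =>
      change fibF (n + 2) ++ fibF (n + 1) = fibSubst (fibF (n + 1) ++ fibF n)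
      rw [fibSubst_append, ← ih (n + 1) (by omega), ← ih n (by omega)]

lemma length_fibF (n : ℕ) : (fibF n).length = Nat.fib (n + 2) := by
  induction n using Nat.strong_induction_on with
  | _ n ih =>
    match n, ih with
    | 0, _ => rfl
    | 1, _ => rfl
    | n + 2, ih =>
      rw [fibF, List.length_append, ih (n + 1) (by omega), ih n (by omega),
        Nat.fib_add_two (n := n + 2)]
      ring

lemma fibF_prefix_fibF_succ (n : ℕ) : fibF n <+: fibF (n + 1) := by
  cases n with
  | zero => exact ⟨[true], rfl⟩
  | succ n => exact List.prefix_append _ _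

lemma fibF_prefix_append_fibF_succ (n : ℕ) : fibF (n + 2) <+: fibF (n + 1) ++ fibF (n + 2) :=
  (List.prefix_append_right_inj (fibF (n + 1))).mpr
    ((fibF_prefix_fibF_succ n).trans (List.prefix_append _ _))

lemma cube_infix_fibF (n : ℕ) :
    fibF (n + 2) ++ fibF (n + 2) ++ fibF (n + 2) <:+: fibF (n + 6) := by
  obtain ⟨z, hz⟩ := fibF_prefix_append_fibF_succ n
  refine ⟨fibF (n + 3), z ++ fibF (n + 1) ++ fibF (n + 2), ?_⟩
  have hz' (t : List Bool) : fibF (n + 2) ++ (z ++ t) = fibF (n + 1) ++ (fibF (n + 2) ++ t) := by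
    simpa using congrArg (· ++ t) hz
  simp only [fibF, List.append_assoc] at hz' ⊢
  rw [hz']

lemma IsFactorF.of_infix {u v : List Bool} (hv : IsFactorF v) (huv : u <:+: v) : IsFactorF u :=
  hv.imp fun _ h => huv.trans h

lemma IsFactorF.exists_infix_fibSubst {u : List Bool} (hu : IsFactorF u) :
    ∃ m, u <:+: fibSubst (fibF m) := by
  obtain ⟨m, hm⟩ := hu
  exact ⟨m, fibF_succ m ▸ hm.trans (fibF_prefix_fibF_succ m).isInfix⟩

lemma not_isFactorF_true_true : ¬ IsFactorF [true, true] := fun h =>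
  h.exists_infix_fibSubst.elim fun _ => not_true_true_infix_fibSubst _

lemma IsFactorF.exists_fibSubst_eq {u : List Bool} (hu : IsFactorF u)
    (hu₀ : u.head? = some false) : ∃ v y, IsFactorF v ∧ fibSubst v = u ++ y := by
  obtain ⟨m, x, y, h⟩ := hu.exists_infix_fibSubst
  obtain ⟨v₁, v, hfibF, -, hv⟩ :=
    exists_split_of_fibSubst_eq_append (h.symm.trans (List.append_assoc x u y)) (by
      rcases u with _ | ⟨c, u⟩ <;> simp_all)
  exact ⟨v, y, ⟨m, hfibF ▸ List.suffix_append v₁ v |>.isInfix⟩, hv⟩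

lemma IsFactorF.false_cons {u : List Bool} (hu : IsFactorF (true :: u)) :
    IsFactorF (false :: true :: u) := by
  obtain ⟨m, x, y, h⟩ := hu.exists_infix_fibSubst
  refine ⟨m + 1, ?_⟩
  rw [fibF_succ, ← h]
  rcases List.eq_nil_or_concat' x with rfl | ⟨x, c, rfl⟩
  · exact absurd h.symm (fibSubst_ne_true_cons _ _)
  cases c
  · exact ⟨x, y, by simp⟩
  · exact absurd ⟨x, u ++ y, by simp [← h]⟩ (not_true_true_infix_fibSubst (fibF m))

lemma not_isFactorF_false_false_false : ¬ IsFactorF [false, false, false] := by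
  intro h
  obtain ⟨v, y, hv, hvy⟩ := h.exists_fibSubst_eq rfl
  rcases v with _ | ⟨_ | _, _ | ⟨_ | _, v⟩⟩ <;> simp at hvy
  exact not_isFactorF_true_true (hv.of_infix ⟨[], v, rfl⟩)

lemma not_isFactorF_false_true_false_true_false_true :
    ¬ IsFactorF [false, true, false, true, false, true] := by
  intro h
  obtain ⟨v, y, hv, hvy⟩ := h.exists_fibSubst_eq rfl
  rcases v with _ | ⟨_ | _, _ | ⟨_ | _, _ | ⟨_ | _, v⟩⟩⟩ <;> simp at hvy
  exact not_isFactorF_false_false_false (hv.of_infix ⟨[], v, rfl⟩)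

lemma not_isFactorF_cube_of_length_le_two {w : List Bool} (hw : w ≠ []) (hw₂ : w.length ≤ 2) :
    ¬ IsFactorF (w ++ w ++ w) := by
  intro h
  rcases w with _ | ⟨_ | _, _ | ⟨_ | _, _ | ⟨_, _⟩⟩⟩ <;> simp at hw hw₂
  · exact not_isFactorF_false_false_false h
  · exact not_isFactorF_false_false_false (h.of_infix ⟨[], [false, false, false], rfl⟩)
  · exact not_isFactorF_false_true_false_true_false_true h
  · exact not_isFactorF_true_true (h.of_infix ⟨[], [true], rfl⟩)
  · exact not_isFactorF_false_true_false_true_false_true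
      (h.false_cons.of_infix ⟨[], [false], rfl⟩)
  · exact not_isFactorF_true_true (h.of_infix ⟨[], [true, true, true, true], rfl⟩)

lemma false_mem_of_isFactorF {u : List Bool} (hu : IsFactorF u) (hu₀ : u ≠ [])
    (hu₁ : u ≠ [true]) : false ∈ u := by
  rcases u with _ | ⟨_ | _, _ | ⟨_ | _, u⟩⟩ <;> simp at hu₀ hu₁ ⊢
  exact (not_isFactorF_true_true (hu.of_infix ⟨[], u, rfl⟩)).elim

/-- A `b`-initial `w` is followed in `w w⁻` by `b`, hence ends in `a`; rotating that `a` to the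
front (it also precedes `w w⁻`) gives an `a`-initial word with the same property. -/
lemma exists_perm_head_eq_false {w : List Bool} (hw : IsFactorF (w ++ w.dropLast))
    (hw₀ : w ≠ []) (hw₁ : w ≠ [true]) :
    ∃ u, u.Perm w ∧ u.head? = some false ∧ IsFactorF (u ++ u.dropLast) := by
  rcases w with _ | ⟨_ | _, t⟩
  · exact absurd rfl hw₀
  · exact ⟨_, List.Perm.refl _, rfl, hw⟩
  rcases List.eq_nil_or_concat' t with rfl | ⟨t, c, rfl⟩
  · exact absurd rfl hw₁
  have hdrop : (true :: (t ++ [c])).dropLast = true :: t := by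
    rw [List.dropLast_cons_of_ne_nil (by simp), List.dropLast_concat]
  rw [hdrop] at hw
  have hc : c = false := by
    rcases c
    · rfl
    · exact absurd (hw.of_infix ⟨true :: t, t, by simp⟩) not_isFactorF_true_true
  subst hc
  refine ⟨false :: true :: t, List.perm_append_singleton _ _ |>.symm, rfl, ?_⟩
  have hsq : false :: (true :: (t ++ [false]) ++ true :: t) =
      (false :: true :: t) ++ (false :: true :: t) := by simp
  refine hw.false_cons.of_infix (hsq ▸ List.IsPrefix.isInfix ?_)
  exact (List.prefix_append_right_inj _).mpr (List.dropLast_prefix _)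

lemma IsFactorF.exists_fibSubst_eq_of_append_dropLast {w : List Bool}
    (hw : IsFactorF (w ++ w.dropLast)) (hw₀ : w.head? = some false) (hw₂ : 2 ≤ w.length) :
    ∃ p, fibSubst p = w ∧ IsFactorF (p ++ p.dropLast) := by
  obtain ⟨v, y, hv, hvy⟩ := hw.exists_fibSubst_eq (by rcases w with _ | _ <;> simp_all)
  have hdrop₀ : (w.dropLast ++ y).head? ≠ some true := by
    rw [List.head?_append, List.head?_dropLast, if_pos (by omega : 1 < w.length), hw₀]
    simp
  obtain ⟨p, r, rfl, rfl, hr⟩ :=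
    exists_split_of_fibSubst_eq_append (hvy.trans (List.append_assoc _ _ _)) hdrop₀
  have hp : ¬ [true, true] <:+: p := fun h =>
    not_isFactorF_true_true (hv.of_infix (h.trans (List.prefix_append p r).isInfix))
  exact ⟨p, rfl, hv.of_infix ((List.prefix_append_right_inj p).mpr
    (dropLast_prefix_of_fibSubst_eq hp hr)).isInfix⟩

theorem IsFactorF.length_eq_fib_of_append_dropLast {w : List Bool}
    (hw : IsFactorF (w ++ w.dropLast)) (hw₀ : w ≠ []) (hw₁ : w ≠ [true]) :
    ∃ j, w.length = Nat.fib (j + 2) ∧ w.count false = Nat.fib (j + 1) := by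
  induction hn : w.length using Nat.strong_induction_on generalizing w with
  | _ n ih =>
  obtain ⟨u, hperm, hu₀, hu⟩ := exists_perm_head_eq_false hw hw₀ hw₁
  rw [← hperm.length_eq] at hn
  rw [← hperm.count_eq]
  subst hn
  by_cases hu₁ : u = [false]
  · exact ⟨0, by simp [hu₁], by simp [hu₁]⟩
  have hu₂ : 2 ≤ u.length := by
    rcases u with _ | ⟨c, _ | _⟩
    · simp at hu₀
    · simp only [List.head?_cons, Option.some.injEq] at hu₀
      exact absurd (hu₀ ▸ rfl) hu₁
    · simp
  obtain ⟨p, rfl, hp⟩ := hu.exists_fibSubst_eq_of_append_dropLast hu₀ hu₂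
  have hp₀ : p ≠ [] := by rintro rfl; simp at hu₂
  have hp₁ : p ≠ [true] := by rintro rfl; simp at hu₂
  have hlt : p.length < (fibSubst p).length := by
    rw [length_fibSubst]
    have := List.count_pos_iff.mpr (false_mem_of_isFactorF (hp.of_infix
      (List.prefix_append _ _).isInfix) hp₀ hp₁)
    omega
  obtain ⟨j, hj, hj'⟩ := ih _ hlt hp hp₀ hp₁ rfl
  refine ⟨j + 1, ?_, by rw [count_false_fibSubst, hj]⟩
  rw [length_fibSubst, hj, hj', Nat.fib_add_two (n := j + 1)]
  ring

/-- `f_m = Nat.fib (m + 2)`, so `f_m` for `m ≥ 2` is `Nat.fib (k + 4)`. -/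
theorem stmt_10 :
    (∀ w : List Bool, w ≠ [] → IsFactorF (w ++ w ++ w) →
      ∃ k : ℕ, w.length = Nat.fib (k + 4)) ∧
    (∀ k : ℕ, ∃ w : List Bool, w ≠ [] ∧ w.length = Nat.fib (k + 4) ∧
      IsFactorF (w ++ w ++ w)) := by
  refine ⟨fun w hw₀ hw => ?_, fun k => ?_⟩
  · have hsq : IsFactorF (w ++ w.dropLast) :=
      hw.of_infix (((List.prefix_append_right_inj w).mpr (List.dropLast_prefix w)).trans
        (List.prefix_append _ _)).isInfix
    have hw₁ : w ≠ [true] := by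
      rintro rfl
      exact not_isFactorF_true_true (hw.of_infix ⟨[], [true], rfl⟩)
    obtain ⟨j, hj, -⟩ := hsq.length_eq_fib_of_append_dropLast hw₀ hw₁
    match j, hj with
    | 0, hj | 1, hj =>
      exact absurd hw (not_isFactorF_cube_of_length_le_two hw₀ (by rw [hj]; decide))
    | k + 2, hk => exact ⟨k, hk⟩
  · refine ⟨fibF (k + 2), ?_, length_fibF (k + 2), k + 6, cube_infix_fibF k⟩
    exact List.ne_nil_of_length_pos (length_fibF (k + 2) ▸ Nat.fib_pos.mpr (by omega))
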